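/- Under Conditions GR and SP, for sufficiently large n, the cardinality of the high-signal set H = H(β) = {ν : |q_{νj}| ≥ β τ_{nj} for some 1 ≤ j ≤ m̄} satisfies m̄ ≤ card(H) ≤ C M_n, where C is a constant depending only on β and r. -/

import Mathlib

open MeasureTheory ProbabilityTheory Matrix Finset Filter

noncomputable section

namespace SPCA

/-- `h(x) = x² / (x+1)`. -/
def hfun (x : ℝ) : ℝ := x ^ 2 / (x + 1)

/-- The `k`-th largest element (1-indexed) of a finite family of reals; `0` if out of range. -/
def kthLargest {ι : Type} [Fintype ι] (f : ι → ℝ) (k : ℕ) : ℝ :=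
  (((Finset.univ.val.map f).sort (· ≤ ·)).reverse).getD (k - 1) 0

/-- The `j`-th largest eigenvalue (1-indexed) of a real symmetric matrix
(junk value `0` if the matrix is not symmetric). -/
def eigvalK {ι : Type} [Fintype ι] [DecidableEq ι] (M : Matrix ι ι ℝ) (j : ℕ) : ℝ := by
  classical exact if h : M.IsHermitian then kthLargest h.eigenvalues j else 0

/-- Orthogonal projection onto a subspace of `ℝ^p`, as an endomorphism. -/
def projMap {p : ℕ} (U : Submodule ℝ (EuclideanSpace ℝ (Fin p))) :
    EuclideanSpace ℝ (Fin p) →L[ℝ] EuclideanSpace ℝ (Fin p) :=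
  U.subtypeL.comp (Submodule.orthogonalProjection U)

/-- The subspace loss `L(U, V) = ‖P_U − P_V‖²` (squared spectral norm of the
difference of the orthogonal projections). -/
def sLoss {p : ℕ} (U V : Submodule ℝ (EuclideanSpace ℝ (Fin p))) : ℝ :=
  ‖projMap U - projMap V‖ ^ 2

/-- Column span (range) of a `p × m` matrix. -/
def colSpan {p m : ℕ} (Q : Matrix (Fin p) (Fin m) ℝ) :
    Submodule ℝ (EuclideanSpace ℝ (Fin p)) :=
  Submodule.span ℝ (Set.range fun j : Fin m => (WithLp.toLp 2 (fun ν => Q ν j) : EuclideanSpace ℝ (Fin p)))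

/-- Span of the vectors `q 1, …, q m` (1-indexed family). -/
def prinSpan {p : ℕ} (q : ℕ → Fin p → ℝ) (m : ℕ) :
    Submodule ℝ (EuclideanSpace ℝ (Fin p)) :=
  Submodule.span ℝ ((fun j => (WithLp.toLp 2 (q j) : EuclideanSpace ℝ (Fin p))) '' Set.Icc 1 m)

/-- The `j`-th column (1-indexed) of a `p × m` matrix, as a vector in `ℝ^p`. -/
def colVec {p m : ℕ} (Q : Matrix (Fin p) (Fin m) ℝ) (j : ℕ) : Fin p → ℝ :=
  fun ν => if h : j - 1 < m then Q ν ⟨j - 1, h⟩ else 0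

/-- The spiked covariance matrix `Σ = ∑_{j=1}^{m̄} λ_j² q_j q_jᵀ + I`. -/
def spikedCov {p : ℕ} (mbar : ℕ) (lam2 : ℕ → ℝ) (q : ℕ → Fin p → ℝ) :
    Matrix (Fin p) (Fin p) ℝ :=
  (∑ j ∈ Finset.Icc 1 mbar, lam2 j • Matrix.vecMulVec (q j) (q j)) + 1

/-- `p_n = p ∨ n`. -/
def pnn (p n : ℕ) : ℕ := max p n

/-- `τ_{nj} = [log(p_n) / (n h(λ_j²))]^{1/2}`. -/
def tau (p n : ℕ) (lam2 : ℕ → ℝ) (j : ℕ) : ℝ :=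
  Real.sqrt (Real.log (pnn p n) / (n * hfun (lam2 j)))

/-- `M_n = p ∧ ∑_{j=1}^{m̄} s_j^r τ_{nj}^{-r}`. -/
def Mn (p n mbar : ℕ) (r : ℝ) (s lam2 : ℕ → ℝ) : ℝ :=
  min (p : ℝ) (∑ j ∈ Finset.Icc 1 mbar, s j ^ r / tau p n lam2 j ^ r)

/-- `ε_{nj}² = (λ_1²+1)(λ_{j+1}²+1)/(λ_j² − λ_{j+1}²)² · log(p_n)/n`, with the
convention `ε_{n0}² = 0` (corresponding to `λ_0² = ∞`). -/
def epsSq (p n : ℕ) (lam2 : ℕ → ℝ) (j : ℕ) : ℝ :=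
  if j = 0 then 0 else
    (lam2 1 + 1) * (lam2 (j + 1) + 1) / (lam2 j - lam2 (j + 1)) ^ 2 *
      (Real.log (pnn p n) / n)

/-- Membership in the weak-`ℓ_r` ball of radius `s`: the `k`-th largest magnitude is
at most `s k^{-1/r}`. -/
def weakLr {p : ℕ} (r s : ℝ) (u : Fin p → ℝ) : Prop :=
  ∀ k : ℕ, 1 ≤ k → kthLargest (fun ν => |u ν|) k ≤ s * (k : ℝ) ^ (-(1 / r))

/-- The uniformity class `Θ_n`: `q 1, …, q m̄` are orthonormal and `q j ∈ wℓ_r(s j)`. -/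
def inClass {p : ℕ} (mbar : ℕ) (r : ℝ) (s : ℕ → ℝ) (q : ℕ → Fin p → ℝ) : Prop :=
  (∀ j ∈ Finset.Icc 1 mbar, ∀ j' ∈ Finset.Icc 1 mbar,
      ∑ ν, q j ν * q j' ν = if j = j' then 1 else 0) ∧
  ∀ j ∈ Finset.Icc 1 mbar, weakLr r (s j) (q j)

/-- The high-signal set `H(β) = {ν : |q_{νj}| ≥ β τ_{nj} for some 1 ≤ j ≤ m̄}`. -/
def Hset {p : ℕ} (n mbar : ℕ) (lam2 : ℕ → ℝ) (β : ℝ) (q : ℕ → Fin p → ℝ) :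
    Finset (Fin p) := by
  classical
  exact Finset.univ.filter fun ν => ∃ j ∈ Finset.Icc 1 mbar, β * tau p n lam2 j ≤ |q j ν|

/-- The law of a single observation `x = ∑_j λ_j v_j q_j + z` with `v, z` standard
Gaussian: this is `N_p(0, Σ)` for the spiked covariance `Σ`. -/
def obsLaw {p : ℕ} (mbar : ℕ) (lam2 : ℕ → ℝ) (q : ℕ → Fin p → ℝ) :
    Measure (Fin p → ℝ) :=
  Measure.map
    (fun vz : (Fin mbar → ℝ) × (Fin p → ℝ) =>
      fun ν => (∑ j : Fin mbar, Real.sqrt (lam2 (j + 1)) * vz.1 j * q (j + 1) ν) + vz.2 ν)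
    ((Measure.pi fun _ : Fin mbar => gaussianReal 0 1).prod
      (Measure.pi fun _ : Fin p => gaussianReal 0 1))

/-- The joint law of `n` i.i.d. observations from `N_p(0, Σ)`. -/
def sampleLaw (n : ℕ) {p : ℕ} (mbar : ℕ) (lam2 : ℕ → ℝ) (q : ℕ → Fin p → ℝ) :
    Measure (Fin n → Fin p → ℝ) :=
  Measure.pi fun _ : Fin n => obsLaw mbar lam2 q

/-- Sample covariance matrix `S = n⁻¹ ∑ x_i x_iᵀ`. -/
def sampleCov {n p : ℕ} (x : Fin n → Fin p → ℝ) : Matrix (Fin p) (Fin p) ℝ :=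
  (n : ℝ)⁻¹ • ∑ i, Matrix.vecMulVec (x i) (x i)

/-- `α_n = α √(log(p_n)/n)`. -/
def alphaN (α : ℝ) (p n : ℕ) : ℝ := α * Real.sqrt (Real.log (pnn p n) / n)

/-- The set `B = {ν : S_{νν} ≥ 1 + α_n}` selected by diagonal thresholding. -/
def Bset {p : ℕ} (S : Matrix (Fin p) (Fin p) ℝ) (αn : ℝ) : Finset (Fin p) := by
  classical exact Finset.univ.filter fun ν => 1 + αn ≤ S ν ν

/-- The submatrix `S_{BB}`. -/
def subCov {p : ℕ} (S : Matrix (Fin p) (Fin p) ℝ) (B : Finset (Fin p)) :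
    Matrix {ν // ν ∈ B} {ν // ν ∈ B} ℝ :=
  Matrix.submatrix S Subtype.val Subtype.val

/-- `ℓ_j^B = λ_j(S_{BB}) ∨ 1`. -/
def ellB {p : ℕ} (S : Matrix (Fin p) (Fin p) ℝ) (B : Finset (Fin p)) (j : ℕ) : ℝ :=
  max (eigvalK (subCov S B) j) 1

/-- Threshold levels `γ_{nj} = γ √( (λ_j(S_BB) ∨ 1) log(p_n)/n )` of ITSPCA. -/
def gammaN {p : ℕ} (n : ℕ) (α γ : ℝ) (S : Matrix (Fin p) (Fin p) ℝ) : ℕ → ℝ :=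
  fun j => γ * Real.sqrt (ellB S (Bset S (alphaN α p n)) j * Real.log (pnn p n) / n)

/-- The stopping time `K*` of ITSPCA (a real number; the algorithm is stopped after
`⌈K*⌉` iterations). -/
def Kstar {p : ℕ} (n : ℕ) (α : ℝ) (S : Matrix (Fin p) (Fin p) ℝ) (m : ℕ) : ℝ :=
  1.1 * ellB S (Bset S (alphaN α p n)) 1 /
      (ellB S (Bset S (alphaN α p n)) m - ellB S (Bset S (alphaN α p n)) (m + 1)) *
    ((1 + 1 / Real.log 2) * Real.log n +
      max 0 (Real.log (hfun (ellB S (Bset S (alphaN α p n)) 1 - 1))))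

/-- The theoretical iteration count
`K = ((λ_1²+1)/(λ_m² − λ_{m+1}²)) [(1 + 1/log 2) log n + 0 ∨ log h(λ_1²)]`. -/
def Kthry (n : ℕ) (lam2 : ℕ → ℝ) (m : ℕ) : ℝ :=
  (lam2 1 + 1) / (lam2 m - lam2 (m + 1)) *
    ((1 + 1 / Real.log 2) * Real.log n + max 0 (Real.log (hfun (lam2 1))))

/-- A valid thresholding function: `|η(t,γ) − t| ≤ γ` and `η(t,γ) 1{|t| ≤ γ} = 0`. -/
def ThresholdFun (η : ℝ → ℝ → ℝ) : Prop :=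
  ∀ t γ : ℝ, 0 < γ → |η t γ - t| ≤ γ ∧ (|t| ≤ γ → η t γ = 0)

/-- A run of the reduced-PCA/zero-padding steps of DTSPCA on `S` with feature set `B`:
`w j` (for `j < card B`) are orthonormal eigenvectors of `S_{BB}` for its `j`-th largest
eigenvalue, and `w j = 0` for `j ≥ card B`. -/
structure DTRunOn {p : ℕ} (S : Matrix (Fin p) (Fin p) ℝ) (B : Finset (Fin p)) (m : ℕ) where
  w : Fin m → ({ν // ν ∈ B} → ℝ)
  w_eig : ∀ j : Fin m, (j : ℕ) < B.card →
    (subCov S B) *ᵥ (w j) = eigvalK (subCov S B) ((j : ℕ) + 1) • w j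
  w_norm : ∀ j : Fin m, (j : ℕ) < B.card → ∑ ν, (w j ν) ^ 2 = 1
  w_orth : ∀ j j' : Fin m, j ≠ j' → ∑ ν, w j ν * w j' ν = 0
  w_zero : ∀ j : Fin m, B.card ≤ (j : ℕ) → w j = 0

/-- The zero-padded initial orthonormal matrix `Q̂⁽⁰⁾` produced by DTSPCA. -/
def DTRunOn.Q0 {p m : ℕ} {S : Matrix (Fin p) (Fin p) ℝ} {B : Finset (Fin p)}
    (dt : DTRunOn S B m) : Matrix (Fin p) (Fin m) ℝ := by
  classical exact Matrix.of fun ν j => if h : ν ∈ B then dt.w j ⟨ν, h⟩ else 0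

/-- Entrywise thresholding of a `p × m` matrix at levels `γs 1, …, γs m` (columnwise). -/
def thMat {p m : ℕ} (η : ℝ → ℝ → ℝ) (γs : ℕ → ℝ) (T : Matrix (Fin p) (Fin m) ℝ) :
    Matrix (Fin p) (Fin m) ℝ :=
  Matrix.of fun ν j => η (T ν j) (γs ((j : ℕ) + 1))

/-- A run of the ITSPCA iteration on the matrix `S`, with thresholding function `η`,
threshold levels `γs`, and initial matrix `Q0`: at each step,
`Q^{(k+1)} R^{(k+1)} = η(S Q^{(k)}, γ)` is a QR factorization (with orthonormal `Q`
whenever the thresholded matrix has full column rank). -/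
structure ITRun {p m : ℕ} (S : Matrix (Fin p) (Fin p) ℝ) (η : ℝ → ℝ → ℝ)
    (γs : ℕ → ℝ) (Q0 : Matrix (Fin p) (Fin m) ℝ) where
  Q : ℕ → Matrix (Fin p) (Fin m) ℝ
  R : ℕ → Matrix (Fin m) (Fin m) ℝ
  q_init : Q 0 = Q0
  qr : ∀ k : ℕ, Q (k + 1) * R (k + 1) = thMat η γs (S * Q k)
  r_tri : ∀ k : ℕ, ∀ i j : Fin m, (j : ℕ) < (i : ℕ) → R (k + 1) i j = 0
  r_diag : ∀ k : ℕ, ∀ i : Fin m, 0 ≤ R (k + 1) i i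
  q_orth : ∀ k : ℕ, (thMat η γs (S * Q k)).rank = m → (Q (k + 1))ᵀ * Q (k + 1) = 1

/-- A (1-indexed) family `v 1, …, v mm` of orthonormal leading eigenvectors of `M`:
`v j` is a unit eigenvector for the `j`-th largest eigenvalue. -/
def IsLeadingEigvecs {p : ℕ} (M : Matrix (Fin p) (Fin p) ℝ) (mm : ℕ)
    (v : ℕ → Fin p → ℝ) : Prop :=
  (∀ j, 1 ≤ j → j ≤ mm → M *ᵥ v j = eigvalK M j • v j ∧ ∑ ν, (v j ν) ^ 2 = 1) ∧
  ∀ j j', 1 ≤ j → j ≤ mm → 1 ≤ j' → j' ≤ mm → j ≠ j' → ∑ ν, v j ν * v j' ν = 0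

/-- The oracle version of a matrix: equal to `M` on the `H × H` block, to the identity
on the `Hᶜ × Hᶜ` block, and zero on the off-diagonal blocks. -/
def oracleMat {p : ℕ} (M : Matrix (Fin p) (Fin p) ℝ) (H : Finset (Fin p)) :
    Matrix (Fin p) (Fin p) ℝ := by
  classical
  exact Matrix.of fun ν μ => if ν ∈ H ∧ μ ∈ H then M ν μ else if ν = μ then 1 else 0

/-- `t_k² = 6 log(p_n)/n + 2k(log p_n + 1)/n`. -/
def tkSq (p n k : ℕ) : ℝ :=
  6 * Real.log (pnn p n) / n + 2 * k * (Real.log (pnn p n) + 1) / n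

/-- `δ_k = 2(√(k/n) + t_k) + (√(k/n) + t_k)²`. -/
def deltaK (p n k : ℕ) : ℝ :=
  2 * (Real.sqrt (k / n) + Real.sqrt (tkSq p n k)) +
    (Real.sqrt (k / n) + Real.sqrt (tkSq p n k)) ^ 2

/-- The estimator `m̂ = max{j ≥ 1 : ℓ_j^B > 1 + δ_{card B}}` of the number of spikes. -/
def mhat {p : ℕ} (n : ℕ) (S : Matrix (Fin p) (Fin p) ℝ) (α : ℝ) : ℕ :=
  sSup {j : ℕ | 1 ≤ j ∧
    1 + deltaK p n (Bset S (alphaN α p n)).card < ellB S (Bset S (alphaN α p n)) j}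

/-- Basic structure of the spike sequences: positive and nonincreasing on `[1, m̄]`,
zero beyond `m̄`. -/
def SpikeOK (mbar : ℕ) (lam2 : ℕ → ℕ → ℝ) : Prop :=
  ∀ n, (∀ j ∈ Finset.Icc 1 mbar, 0 < lam2 n j) ∧
    (∀ j j' : ℕ, 1 ≤ j → j ≤ j' → j' ≤ mbar → lam2 n j' ≤ lam2 n j) ∧
    (∀ j, mbar < j → lam2 n j = 0)

/-- Condition GR (growth rates). -/
def CondGR (mbar : ℕ) (r : ℝ) (p : ℕ → ℕ) (lam2 : ℕ → ℕ → ℝ) : Prop :=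
  Tendsto (fun n => Real.log (p n) / n) atTop (nhds 0) ∧
  (∃ C : ℝ, ∀ᶠ n in atTop, lam2 n 1 ≤ C * pnn (p n) n) ∧
  Tendsto (fun n => Real.log (pnn (p n) n) / (n * lam2 n mbar ^ 2)) atTop (nhds 0) ∧
  (∃ C : ℝ, ∀ᶠ n in atTop,
    lam2 n 1 / lam2 n mbar ≤
      C * (n * (Real.log (pnn (p n) n) / n) ^ ((1 : ℝ) / 2 + r / 4))) ∧
  ∀ j ∈ Finset.Icc 1 mbar, ∃ Λ : ENNReal, 1 ≤ Λ ∧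
    Tendsto (fun n => ENNReal.ofReal (lam2 n 1 / (lam2 n j - lam2 n (j + 1))))
      atTop (nhds Λ)

/-- Condition SP (sparsity). -/
def CondSP (mbar : ℕ) (r : ℝ) (p : ℕ → ℕ) (lam2 s : ℕ → ℕ → ℝ) : Prop :=
  ∀ j ∈ Finset.Icc 1 mbar, (∀ n, 1 ≤ s n j) ∧
    Tendsto (fun n =>
        s n j ^ r * (Real.log (pnn (p n) n) / (n * lam2 n j ^ 2)) ^ ((1 : ℝ) / 2 - r / 4)
          / min 1 (lam2 n 1 ^ 2))
      atTop (nhds 0)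

/-- Condition AD(m, κ): `λ_m² − λ_{m+1}² ≥ λ_1²/κ` for sufficiently large `n`. -/
def CondAD (m : ℕ) (κ : ℝ) (lam2 : ℕ → ℕ → ℝ) : Prop :=
  ∀ᶠ n in atTop, lam2 n 1 / κ ≤ lam2 n m - lam2 n (m + 1)

end SPCA

namespace SPCA

lemma le_kthLargest {ι : Type} [Fintype ι] (f : ι → ℝ) (t : ℝ) (c : ℕ) (hc : 1 ≤ c)
    (hcard : c ≤ (Finset.univ.filter fun ν => t ≤ f ν).card) : t ≤ kthLargest f c := by
  classical
  set l := (Finset.univ.val.map f).sort (· ≤ ·) with hl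
  set L := l.reverse with hL
  have hsorted : L.Pairwise (fun a b => b ≤ a) := by
    rw [hL, List.pairwise_reverse]
    exact Multiset.pairwise_sort _ _
  have hcnt : L.countP (fun x => decide (t ≤ x)) =
      (Finset.univ.filter fun ν => t ≤ f ν).card := by
    rw [hL, List.countP_reverse]
    have h1 : l.countP (fun x => decide (t ≤ x)) = Multiset.countP (fun x => t ≤ x) (l : Multiset ℝ) := by
      rw [Multiset.coe_countP]
    rw [h1, hl, Multiset.sort_eq, Multiset.countP_map]
    rfl
  have hclen : c ≤ L.length := by
    calc c ≤ L.countP (fun x => decide (t ≤ x)) := by rw [hcnt]; exact hcard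
    _ ≤ L.length := List.countP_le_length
  have hlt : c - 1 < L.length := by omega
  have hgetD : kthLargest f c = L[c-1] := List.getD_eq_getElem L 0 hlt
  rw [hgetD]
  by_contra hcon
  push_neg at hcon
  -- all elements of drop (c-1) are < t
  have hdrop : (L.drop (c-1)).countP (fun x => decide (t ≤ x)) = 0 := by
    rw [List.countP_eq_zero]
    intro a ha
    rcases List.mem_iff_get.mp ha with ⟨i, hi⟩
    have hidx : (c-1) + (i : ℕ) < L.length := by
      have := i.isLt
      simp only [List.length_drop] at this
      omega
    have hval : a = L[(c-1) + (i:ℕ)] := by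
      rw [← hi]
      simp [List.get_eq_getElem, List.getElem_drop]
    have hle : L[(c-1)+(i:ℕ)] ≤ L[c-1] := by
      rcases Nat.eq_zero_or_pos (i:ℕ) with h0 | h0
      · simp [h0]
      · have := List.pairwise_iff_get.mp hsorted ⟨c-1, hlt⟩ ⟨(c-1)+(i:ℕ), hidx⟩ (by simp; omega)
        simpa using this
    simp only [decide_eq_true_eq]
    intro hta
    rw [hval] at hta
    exact absurd (le_trans hta hle) (not_le.mpr hcon)
  have hsplit : L.countP (fun x => decide (t ≤ x)) ≤ c - 1 := by
    conv_lhs => rw [← List.take_append_drop (c-1) L]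
    rw [List.countP_append, hdrop]
    have h1 := List.countP_le_length (p := fun x => decide (t ≤ x)) (l := L.take (c-1))
    have h2 : (L.take (c-1)).length ≤ c - 1 := by simp
    omega
  rw [hcnt] at hsplit
  omega

lemma card_le_weakLr {p : ℕ} {r s t : ℝ} (hr : 0 < r) (hs : 0 < s) (ht : 0 < t)
    {u : Fin p → ℝ} (hu : weakLr r s u) :
    ((Finset.univ.filter fun ν => t ≤ |u ν|).card : ℝ) ≤ (s / t) ^ r := by
  classical
  set c := (Finset.univ.filter fun ν => t ≤ |u ν|).card with hc
  rcases Nat.eq_zero_or_pos c with h0 | h1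
  · simp only [h0, Nat.cast_zero]; positivity
  · have hk := le_trans (le_kthLargest (fun ν => |u ν|) t c h1 le_rfl) (hu c h1)
    have hcpos : (0:ℝ) < (c:ℝ) := by exact_mod_cast h1
    have hpow : (c:ℝ) ^ (-(1/r)) = ((c:ℝ) ^ (1/r))⁻¹ := Real.rpow_neg hcpos.le _
    rw [hpow] at hk
    have hppos : (0:ℝ) < (c:ℝ) ^ (1/r) := Real.rpow_pos_of_pos hcpos _
    have h2 : (c:ℝ) ^ (1/r) ≤ s / t := by
      rw [le_div_iff₀ ht]
      calc (c:ℝ)^(1/r) * t ≤ (c:ℝ)^(1/r) * (s * ((c:ℝ)^(1/r))⁻¹) := by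
            apply mul_le_mul_of_nonneg_left hk hppos.le
      _ = s := by field_simp
    calc (c:ℝ) = ((c:ℝ) ^ (1/r)) ^ r := by
          rw [← Real.rpow_mul hcpos.le, one_div, inv_mul_cancel₀ hr.ne', Real.rpow_one]
    _ ≤ (s/t)^r := Real.rpow_le_rpow hppos.le h2 hr.le

lemma tailsum {p : ℕ} {r s t : ℝ} (hr0 : 0 < r) (hr2 : r < 2) (hs : 0 < s) (ht : 0 < t)
    {u : Fin p → ℝ} (hu : weakLr r s u) :
    ∑ ν ∈ Finset.univ.filter (fun ν => |u ν| < t), (u ν)^2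
      ≤ ((2:ℝ)^r / (1 - (2:ℝ)^(r-2))) * (s^r * t^(2-r)) := by
  classical
  set y : ℝ := (2:ℝ)^(r-2) with hy
  have hy0 : 0 < y := Real.rpow_pos_of_pos two_pos _
  have hy1 : y < 1 := Real.rpow_lt_one_of_one_lt_of_neg one_lt_two (by linarith)
  set K : ℝ := (2:ℝ)^r * (s^r * t^(2-r)) with hK
  have hK0 : 0 ≤ K := by positivity
  set T : Finset (Fin p) := Finset.univ.filter (fun ν => 0 < |u ν| ∧ |u ν| < t) with hT
  have hsubset : T ⊆ Finset.univ.filter (fun ν => |u ν| < t) := by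
    intro ν hν
    simp only [hT, mem_filter] at hν ⊢
    exact ⟨hν.1, hν.2.2⟩
  have hsum_eq : ∑ ν ∈ Finset.univ.filter (fun ν => |u ν| < t), (u ν)^2 = ∑ ν ∈ T, (u ν)^2 := by
    refine (Finset.sum_subset hsubset ?_).symm
    intro ν hν hνT
    simp only [hT, mem_filter, mem_univ, true_and] at hν hνT
    have h0 : ¬ 0 < |u ν| := fun h => hνT ⟨h, hν⟩
    have hz : u ν = 0 := abs_eq_zero.mp (le_antisymm (not_lt.mp h0) (abs_nonneg _))
    simp [hz]
  -- level function
  set lev : Fin p → ℕ := fun ν => (⌊Real.logb 2 (t / |u ν|)⌋).toNat with hlev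
  have hlev_bounds : ∀ ν ∈ T, |u ν| ≤ t * ((2:ℝ)^(lev ν : ℝ))⁻¹ ∧
      t * ((2:ℝ)^((lev ν : ℝ) + 1))⁻¹ < |u ν| := by
    intro ν hν
    simp only [hT, mem_filter, mem_univ, true_and] at hν
    obtain ⟨ha0, hat⟩ := hν
    set a := |u ν| with ha
    have hta : 1 < t / a := (one_lt_div ha0).mpr hat
    have hlb0 : 0 ≤ Real.logb 2 (t / a) := Real.logb_nonneg one_lt_two hta.le
    have hfl0 : 0 ≤ ⌊Real.logb 2 (t / a)⌋ := Int.floor_nonneg.mpr hlb0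
    have hcast : ((lev ν : ℕ) : ℝ) = (⌊Real.logb 2 (t / a)⌋ : ℝ) := by
      simp only [hlev]
      exact_mod_cast congrArg (Int.cast : ℤ → ℝ) (Int.toNat_of_nonneg hfl0)
    have h1 : ((lev ν : ℕ) : ℝ) ≤ Real.logb 2 (t / a) := by
      rw [hcast]; exact Int.floor_le _
    have h2 : Real.logb 2 (t / a) < ((lev ν : ℕ) : ℝ) + 1 := by
      rw [hcast]; exact Int.lt_floor_add_one _
    have hrpow : (2:ℝ) ^ Real.logb 2 (t / a) = t / a :=
      Real.rpow_logb two_pos (by norm_num) (by positivity)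
    have h2l : (0:ℝ) < (2:ℝ)^((lev ν : ℕ):ℝ) := Real.rpow_pos_of_pos two_pos _
    have h2l1 : (0:ℝ) < (2:ℝ)^(((lev ν : ℕ):ℝ)+1) := Real.rpow_pos_of_pos two_pos _
    constructor
    · have hthis := Real.rpow_le_rpow_of_exponent_le one_le_two h1
      rw [hrpow] at hthis
      have h3 := (le_div_iff₀ ha0).mp hthis
      rw [← div_eq_mul_inv, le_div_iff₀ h2l, mul_comm]
      exact h3
    · have hthis := Real.rpow_lt_rpow_of_exponent_lt one_lt_two h2
      rw [hrpow] at hthis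
      have h3 := (div_lt_iff₀ ha0).mp hthis
      rw [← div_eq_mul_inv, div_lt_iff₀ h2l1, mul_comm]
      exact h3
  set I : ℕ := T.sup lev with hI
  have hmaps : ∀ ν ∈ T, lev ν ∈ Finset.range (I + 1) := by
    intro ν hν
    simp only [mem_range]
    exact Nat.lt_succ_of_le (Finset.le_sup hν)
  have hfib := Finset.sum_fiberwise_of_maps_to hmaps (fun ν => (u ν)^2)
  rw [hsum_eq, ← hfib]
  -- bound each fiber
  have hfiber_bound : ∀ i ∈ Finset.range (I+1),
      ∑ ν ∈ T.filter (fun ν => lev ν = i), (u ν)^2 ≤ K * y ^ i := by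
    intro i _
    have hcard : ((T.filter (fun ν => lev ν = i)).card : ℝ)
        ≤ (s / (t * ((2:ℝ)^((i:ℝ)+1))⁻¹)) ^ r := by
      have hsub2 : T.filter (fun ν => lev ν = i) ⊆
          Finset.univ.filter (fun ν => t * ((2:ℝ)^((i:ℝ)+1))⁻¹ ≤ |u ν|) := by
        intro ν hν
        simp only [mem_filter, mem_univ, true_and] at hν ⊢
        have := (hlev_bounds ν hν.1).2
        rw [hν.2] at this
        exact this.le
      calc ((T.filter (fun ν => lev ν = i)).card : ℝ)
          ≤ ((Finset.univ.filter (fun ν => t * ((2:ℝ)^((i:ℝ)+1))⁻¹ ≤ |u ν|)).card : ℝ) := by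
            exact_mod_cast Finset.card_le_card hsub2
      _ ≤ (s / (t * ((2:ℝ)^((i:ℝ)+1))⁻¹)) ^ r := card_le_weakLr hr0 hs (by positivity) hu
    have hterm : ∀ ν ∈ T.filter (fun ν => lev ν = i), (u ν)^2 ≤ (t * ((2:ℝ)^(i:ℝ))⁻¹)^2 := by
      intro ν hν
      simp only [mem_filter] at hν
      have h1 := (hlev_bounds ν hν.1).1
      rw [hν.2] at h1
      calc (u ν)^2 = |u ν|^2 := (sq_abs _).symm
      _ ≤ (t * ((2:ℝ)^(i:ℝ))⁻¹)^2 := by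
            apply sq_le_sq' _ h1
            have : (0:ℝ) ≤ t * ((2:ℝ)^(i:ℝ))⁻¹ := by positivity
            calc -(t * ((2:ℝ)^(i:ℝ))⁻¹) ≤ 0 := by linarith
            _ ≤ |u ν| := abs_nonneg _
    calc ∑ ν ∈ T.filter (fun ν => lev ν = i), (u ν)^2
        ≤ ((T.filter (fun ν => lev ν = i)).card : ℝ) * (t * ((2:ℝ)^(i:ℝ))⁻¹)^2 := by
          rw [← nsmul_eq_mul]
          exact Finset.sum_le_card_nsmul _ _ _ hterm
    _ ≤ (s / (t * ((2:ℝ)^((i:ℝ)+1))⁻¹)) ^ r * (t * ((2:ℝ)^(i:ℝ))⁻¹)^2 := by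
          apply mul_le_mul_of_nonneg_right hcard (by positivity)
    _ = K * y ^ i := by
          rw [hK, hy]
          have hpos1 : (0:ℝ) < (s / (t * ((2:ℝ)^((i:ℝ)+1))⁻¹)) ^ r * (t * ((2:ℝ)^(i:ℝ))⁻¹)^2 := by
            positivity
          have hpos2 : (0:ℝ) < (2:ℝ)^r * (s^r * t^(2-r)) * ((2:ℝ)^(r-2))^i := by positivity
          have l1 : Real.log ((s / (t * ((2:ℝ)^((i:ℝ)+1))⁻¹)) ^ r * (t * ((2:ℝ)^(i:ℝ))⁻¹)^2)
              = r * (Real.log s - (Real.log t - ((i:ℝ)+1) * Real.log 2))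
                + 2 * (Real.log t - (i:ℝ) * Real.log 2) := by
            rw [Real.log_mul (by positivity) (by positivity), Real.log_rpow (by positivity),
              Real.log_pow, Real.log_div hs.ne' (by positivity),
              Real.log_mul ht.ne' (by positivity), Real.log_inv,
              Real.log_rpow two_pos,
              Real.log_mul ht.ne' (by positivity), Real.log_inv, Real.log_rpow two_pos]
            push_cast
            ring
          have l2 : Real.log ((2:ℝ)^r * (s^r * t^(2-r)) * ((2:ℝ)^(r-2))^i)
              = r*Real.log 2 + (r*Real.log s + (2-r)*Real.log t)
                + (i:ℝ)*((r-2)*Real.log 2) := by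
            rw [Real.log_mul (by positivity) (by positivity),
              Real.log_mul (by positivity) (by positivity),
              Real.log_mul (by positivity) (by positivity),
              Real.log_rpow two_pos, Real.log_rpow hs, Real.log_rpow ht, Real.log_pow,
              Real.log_rpow two_pos]
          apply Real.log_injOn_pos (Set.mem_Ioi.mpr hpos1) (Set.mem_Ioi.mpr hpos2)
          rw [l1, l2]
          ring
  have hgeom : ∑ i ∈ Finset.range (I+1), y^i ≤ 1/(1-y) := by
    rw [geom_sum_eq hy1.ne]
    have hyn : (0:ℝ) ≤ y^(I+1) := pow_nonneg hy0.le _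
    have h1y : (0:ℝ) < 1 - y := by linarith
    have heq : (y^(I+1)-1)/(y-1) = (1 - y^(I+1))/(1-y) := by
      rw [div_eq_div_iff (by linarith) (by linarith)]
      ring
    rw [heq, div_le_div_iff₀ h1y h1y]
    nlinarith
  calc ∑ i ∈ Finset.range (I+1), ∑ ν ∈ T.filter (fun ν => lev ν = i), (u ν)^2
      ≤ ∑ i ∈ Finset.range (I+1), K * y^i := Finset.sum_le_sum hfiber_bound
  _ = K * ∑ i ∈ Finset.range (I+1), y^i := by rw [Finset.mul_sum]
  _ ≤ K * (1/(1-y)) := mul_le_mul_of_nonneg_left hgeom hK0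
  _ = ((2:ℝ)^r / (1 - (2:ℝ)^(r-2))) * (s^r * t^(2-r)) := by
        rw [hK, hy]
        ring

lemma lower_card {p : ℕ} (mbar : ℕ) (q : ℕ → Fin p → ℝ) (H : Finset (Fin p)) (δ : ℝ)
    (hδ0 : 0 ≤ δ) (hδm : δ * mbar < 1)
    (horth : ∀ j ∈ Finset.Icc 1 mbar, ∀ j' ∈ Finset.Icc 1 mbar,
      ∑ ν, q j ν * q j' ν = if j = j' then (1:ℝ) else 0)
    (heps : ∀ j ∈ Finset.Icc 1 mbar, ∑ ν ∈ Hᶜ, (q j ν)^2 ≤ δ) :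
    mbar ≤ H.card := by
  classical
  set A : Matrix {ν // ν ∈ H} (Fin mbar) ℝ :=
    Matrix.of (fun ν j => q ((j:ℕ)+1) ν.1) with hA
  have hmem : ∀ j : Fin mbar, (j:ℕ)+1 ∈ Finset.Icc 1 mbar := by
    intro j
    simp only [Finset.mem_Icc]
    exact ⟨Nat.le_add_left 1 _, j.isLt⟩
  have hinj : Function.Injective A.mulVecLin := by
    rw [← LinearMap.ker_eq_bot, LinearMap.ker_eq_bot']
    intro x hx
    have hxν : ∀ ν : {ν // ν ∈ H}, ∑ j : Fin mbar, q ((j:ℕ)+1) ν.1 * x j = 0 := by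
      intro ν
      have := congrFun hx ν
      simpa [Matrix.mulVecLin_apply, Matrix.mulVec, dotProduct, hA] using this
    set e : Fin mbar → Fin mbar → ℝ :=
      fun j j' => ∑ ν ∈ Hᶜ, q ((j:ℕ)+1) ν * q ((j':ℕ)+1) ν with he
    have hg : ∀ j j' : Fin mbar, ∑ ν ∈ H, q ((j:ℕ)+1) ν * q ((j':ℕ)+1) ν
        = (if j = j' then (1:ℝ) else 0) - e j j' := by
      intro j j'
      have h1 := Finset.sum_add_sum_compl H (fun ν => q ((j:ℕ)+1) ν * q ((j':ℕ)+1) ν)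
      have h2 := horth _ (hmem j) _ (hmem j')
      have hiff : ((j:ℕ)+1 = (j':ℕ)+1) ↔ j = j' := by
        constructor
        · intro h; exact Fin.ext (by omega)
        · intro h; rw [h]
      rw [h2] at h1
      have hite : (if (j:ℕ)+1 = (j':ℕ)+1 then (1:ℝ) else 0) = if j = j' then (1:ℝ) else 0 := by
        rcases eq_or_ne j j' with hjj | hjj
        · rw [if_pos (by rw [hjj]), if_pos hjj]
        · rw [if_neg (fun h => hjj (hiff.mp h)), if_neg hjj]
      rw [hite] at h1
      linarith
    have hzero : ∑ ν ∈ H, (∑ j : Fin mbar, q ((j:ℕ)+1) ν * x j)^2 = 0 := by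
      rw [← Finset.sum_coe_sort]
      apply Finset.sum_eq_zero
      intro ν _
      rw [hxν ν]
      norm_num
    have hexpand : ∑ ν ∈ H, (∑ j : Fin mbar, q ((j:ℕ)+1) ν * x j)^2
        = ∑ j : Fin mbar, ∑ j' : Fin mbar,
            (x j * x j') * ((if j = j' then (1:ℝ) else 0) - e j j') := by
      have step1 : ∑ ν ∈ H, (∑ j : Fin mbar, q ((j:ℕ)+1) ν * x j)^2
          = ∑ j : Fin mbar, ∑ j' : Fin mbar,
              (x j * x j') * (∑ ν ∈ H, q ((j:ℕ)+1) ν * q ((j':ℕ)+1) ν) := by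
        have : ∀ ν ∈ H, (∑ j : Fin mbar, q ((j:ℕ)+1) ν * x j)^2
            = ∑ j : Fin mbar, ∑ j' : Fin mbar,
                (q ((j:ℕ)+1) ν * x j) * (q ((j':ℕ)+1) ν * x j') := by
          intro ν _
          rw [sq, Finset.sum_mul_sum]
        rw [Finset.sum_congr rfl this, Finset.sum_comm]
        refine Finset.sum_congr rfl (fun j _ => ?_)
        rw [Finset.sum_comm]
        refine Finset.sum_congr rfl (fun j' _ => ?_)
        rw [Finset.mul_sum]
        refine Finset.sum_congr rfl (fun ν _ => ?_)
        ring
      rw [step1]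
      refine Finset.sum_congr rfl (fun j _ => Finset.sum_congr rfl (fun j' _ => ?_))
      rw [hg j j']
    have hdiag : ∑ j : Fin mbar, ∑ j' : Fin mbar,
        (x j * x j') * (if j = j' then (1:ℝ) else 0) = ∑ j : Fin mbar, (x j)^2 := by
      refine Finset.sum_congr rfl (fun j _ => ?_)
      rw [Finset.sum_eq_single j]
      · simp [sq]
      · intro j' _ hne
        rw [if_neg (Ne.symm hne), mul_zero]
      · intro h; exact absurd (Finset.mem_univ j) h
    have habs : ∀ j j' : Fin mbar, |e j j'| ≤ δ := by
      intro j j'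
      have hcs := Finset.sum_mul_sq_le_sq_mul_sq Hᶜ
        (fun ν => q ((j:ℕ)+1) ν) (fun ν => q ((j':ℕ)+1) ν)
      have h1 := heps _ (hmem j)
      have h2 := heps _ (hmem j')
      have h1' : (0:ℝ) ≤ ∑ ν ∈ Hᶜ, (q ((j:ℕ)+1) ν)^2 := Finset.sum_nonneg (fun ν _ => sq_nonneg _)
      have hsq : (e j j')^2 ≤ δ^2 := by
        calc (e j j')^2 ≤ (∑ ν ∈ Hᶜ, (q ((j:ℕ)+1) ν)^2) * (∑ ν ∈ Hᶜ, (q ((j':ℕ)+1) ν)^2) := hcs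
        _ ≤ δ^2 := by nlinarith [Finset.sum_nonneg (fun ν (_ : ν ∈ Hᶜ) => sq_nonneg (q ((j':ℕ)+1) ν))]
      calc |e j j'| = Real.sqrt ((e j j')^2) := (Real.sqrt_sq_eq_abs _).symm
      _ ≤ Real.sqrt (δ^2) := Real.sqrt_le_sqrt hsq
      _ = δ := Real.sqrt_sq hδ0
    have hS : ∑ j : Fin mbar, (x j)^2 ≤ δ * mbar * ∑ j : Fin mbar, (x j)^2 := by
      have h1 : ∑ j : Fin mbar, (x j)^2 = ∑ j : Fin mbar, ∑ j' : Fin mbar, (x j * x j') * e j j' := by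
        have := hzero
        rw [hexpand] at this
        have hsub : ∑ j : Fin mbar, ∑ j' : Fin mbar,
            (x j * x j') * ((if j = j' then (1:ℝ) else 0) - e j j')
            = (∑ j : Fin mbar, ∑ j' : Fin mbar, (x j * x j') * (if j = j' then (1:ℝ) else 0))
              - ∑ j : Fin mbar, ∑ j' : Fin mbar, (x j * x j') * e j j' := by
          rw [← Finset.sum_sub_distrib]
          refine Finset.sum_congr rfl (fun j _ => ?_)
          rw [← Finset.sum_sub_distrib]
          refine Finset.sum_congr rfl (fun j' _ => ?_)
          ring
        rw [hsub, hdiag] at this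
        linarith
      have h2 : ∑ j : Fin mbar, ∑ j' : Fin mbar, (x j * x j') * e j j'
          ≤ ∑ j : Fin mbar, ∑ j' : Fin mbar, |x j| * |x j'| * δ := by
        refine Finset.sum_le_sum (fun j _ => Finset.sum_le_sum (fun j' _ => ?_))
        calc (x j * x j') * e j j' ≤ |(x j * x j') * e j j'| := le_abs_self _
        _ = |x j| * |x j'| * |e j j'| := by rw [abs_mul, abs_mul]
        _ ≤ |x j| * |x j'| * δ := by
              apply mul_le_mul_of_nonneg_left (habs j j') (by positivity)
      have h3 : ∑ j : Fin mbar, ∑ j' : Fin mbar, |x j| * |x j'| * δ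
          = δ * (∑ j : Fin mbar, |x j|)^2 := by
        rw [sq, Finset.sum_mul_sum]
        rw [Finset.mul_sum]
        refine Finset.sum_congr rfl (fun j _ => ?_)
        rw [Finset.mul_sum]
        refine Finset.sum_congr rfl (fun j' _ => ?_)
        ring
      have h4 : (∑ j : Fin mbar, |x j|)^2 ≤ (mbar : ℝ) * ∑ j : Fin mbar, (x j)^2 := by
        have := Finset.sum_mul_sq_le_sq_mul_sq Finset.univ (fun j : Fin mbar => |x j|) (fun _ => (1:ℝ))
        simp only [mul_one, one_pow, sq_abs] at this
        calc (∑ j : Fin mbar, |x j|)^2 ≤ (∑ j : Fin mbar, (x j)^2) * (∑ _j : Fin mbar, (1:ℝ)) := this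
        _ = (mbar : ℝ) * ∑ j : Fin mbar, (x j)^2 := by
              rw [Finset.sum_const, Finset.card_univ, Fintype.card_fin]
              simp [mul_comm]
      calc ∑ j : Fin mbar, (x j)^2 = ∑ j : Fin mbar, ∑ j' : Fin mbar, (x j * x j') * e j j' := h1
      _ ≤ δ * (∑ j : Fin mbar, |x j|)^2 := by rw [← h3]; exact h2
      _ ≤ δ * ((mbar : ℝ) * ∑ j : Fin mbar, (x j)^2) := mul_le_mul_of_nonneg_left h4 hδ0
      _ = δ * mbar * ∑ j : Fin mbar, (x j)^2 := by ring
    have hSnn : (0:ℝ) ≤ ∑ j : Fin mbar, (x j)^2 := Finset.sum_nonneg (fun j _ => sq_nonneg _)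
    have hS0 : ∑ j : Fin mbar, (x j)^2 = 0 := by nlinarith
    funext j
    have := (Finset.sum_eq_zero_iff_of_nonneg (fun j _ => sq_nonneg (x j))).mp hS0 j (Finset.mem_univ j)
    have : x j = 0 := by nlinarith [this]
    simpa using this
  have hle := LinearMap.finrank_le_finrank_of_injective hinj
  rw [Module.finrank_pi, Module.finrank_pi, Fintype.card_fin, Fintype.card_coe] at hle
  exact hle

lemma card_Hset_upper {pp : ℕ} (n mbar : ℕ) {r β : ℝ} (hr0 : 0 < r) (hβ : 0 < β)
    (lam2v sv : ℕ → ℝ) (q : ℕ → Fin pp → ℝ)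
    (htau0 : ∀ j ∈ Finset.Icc 1 mbar, 0 < tau pp n lam2v j)
    (hs1 : ∀ j ∈ Finset.Icc 1 mbar, (1:ℝ) ≤ sv j)
    (hweak : ∀ j ∈ Finset.Icc 1 mbar, weakLr r (sv j) (q j)) :
    ((Hset n mbar lam2v β q).card : ℝ) ≤ max 1 ((β^r)⁻¹) * Mn pp n mbar r sv lam2v := by
  classical
  have hsubB : Hset n mbar lam2v β q ⊆ (Finset.Icc 1 mbar).biUnion
      (fun j => Finset.univ.filter fun ν => β * tau pp n lam2v j ≤ |q j ν|) := by
    intro ν hν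
    simp only [Hset, Finset.mem_filter, Finset.mem_univ, true_and] at hν
    obtain ⟨j, hj, hle⟩ := hν
    exact Finset.mem_biUnion.mpr ⟨j, hj, Finset.mem_filter.mpr ⟨Finset.mem_univ _, hle⟩⟩
  have hcard1 : ((Hset n mbar lam2v β q).card : ℝ)
      ≤ ∑ j ∈ Finset.Icc 1 mbar, ((Finset.univ.filter fun ν =>
          β * tau pp n lam2v j ≤ |q j ν|).card : ℝ) := by
    exact_mod_cast le_trans (Finset.card_le_card hsubB) Finset.card_biUnion_le
  have hcard2 : ∀ j ∈ Finset.Icc 1 mbar, ((Finset.univ.filter fun ν =>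
      β * tau pp n lam2v j ≤ |q j ν|).card : ℝ)
      ≤ (β^r)⁻¹ * (sv j ^ r / tau pp n lam2v j ^ r) := by
    intro j hj
    have hτj := htau0 j hj
    have h1 := card_le_weakLr hr0 (lt_of_lt_of_le one_pos (hs1 j hj))
      (mul_pos hβ hτj) (hweak j hj)
    calc ((Finset.univ.filter fun ν =>
        β * tau pp n lam2v j ≤ |q j ν|).card : ℝ)
        ≤ (sv j / (β * tau pp n lam2v j)) ^ r := h1
    _ = (β^r)⁻¹ * (sv j ^ r / tau pp n lam2v j ^ r) := by
        rw [Real.div_rpow (by linarith [hs1 j hj]) (by positivity),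
          Real.mul_rpow hβ.le hτj.le]
        field_simp
  have hsum_nonneg : (0:ℝ) ≤ ∑ j ∈ Finset.Icc 1 mbar, sv j ^ r / tau pp n lam2v j ^ r := by
    apply Finset.sum_nonneg
    intro j hj
    have h1 := htau0 j hj
    have h2 := hs1 j hj
    positivity
  have hub : ((Hset n mbar lam2v β q).card : ℝ)
      ≤ (β^r)⁻¹ * ∑ j ∈ Finset.Icc 1 mbar, sv j ^ r / tau pp n lam2v j ^ r := by
    rw [Finset.mul_sum]
    exact le_trans hcard1 (Finset.sum_le_sum hcard2)
  have hubp : ((Hset n mbar lam2v β q).card : ℝ) ≤ (pp : ℝ) := by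
    have h1 : (Hset n mbar lam2v β q).card ≤ pp := by
      calc (Hset n mbar lam2v β q).card ≤ (Finset.univ : Finset (Fin pp)).card :=
            Finset.card_le_card (Finset.subset_univ _)
      _ = pp := by simp
    exact_mod_cast h1
  rw [Mn]
  rcases le_total ((pp : ℝ)) (∑ j ∈ Finset.Icc 1 mbar, sv j ^ r / tau pp n lam2v j ^ r)
    with h | h
  · rw [min_eq_left h]
    calc ((Hset n mbar lam2v β q).card : ℝ) ≤ (pp : ℝ) := hubp
    _ ≤ max 1 ((β^r)⁻¹) * pp := le_mul_of_one_le_left (by positivity) (le_max_left _ _)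
  · rw [min_eq_right h]
    calc ((Hset n mbar lam2v β q).card : ℝ)
        ≤ (β^r)⁻¹ * ∑ j ∈ Finset.Icc 1 mbar, sv j ^ r / tau pp n lam2v j ^ r := hub
    _ ≤ max 1 ((β^r)⁻¹) * ∑ j ∈ Finset.Icc 1 mbar, sv j ^ r / tau pp n lam2v j ^ r :=
          mul_le_mul_of_nonneg_right (le_max_right _ _) hsum_nonneg

lemma D_le_one {a nr lam lamm : ℝ} (ha : 0 < a) (hn : 0 < nr) (hlam : 0 < lam)
    (hlamm : 0 < lamm) (h1 : a ≤ nr / 8) (h2 : a ≤ nr * lamm^2 / 8) (hml : lamm ≤ lam) :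
    a / (nr * lam^2) * (lam + 1)^2 ≤ 1 := by
  rw [div_mul_eq_mul_div, div_le_one (by positivity)]
  rcases le_total 1 lam with hc | hc
  · have h4 : (lam + 1)^2 ≤ 4 * lam^2 := by
      nlinarith [mul_nonneg (sub_nonneg.mpr hc) (by linarith : (0:ℝ) ≤ 3 * lam + 1)]
    have h5 : a * (lam + 1)^2 ≤ (nr/8) * (4 * lam^2) :=
      mul_le_mul h1 h4 (by positivity) (by positivity)
    nlinarith [h5, mul_pos hn (pow_pos hlam 2)]
  · have h4 : (lam + 1)^2 ≤ 4 := by nlinarith [hlam, hc]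
    have h5 : a * (lam + 1)^2 ≤ (nr * lamm^2 / 8) * 4 :=
      mul_le_mul h2 h4 (by positivity) (by positivity)
    have hmle : lamm^2 ≤ lam^2 := pow_le_pow_left₀ hlamm.le hml 2
    have h6 : nr * lamm^2 ≤ nr * lam^2 := mul_le_mul_of_nonneg_left hmle hn.le
    nlinarith [h5, h6, mul_pos hn (pow_pos hlam 2)]

lemma tau_rpow_le {x L lam r : ℝ} (hr2 : r < 2) (hx0 : 0 < x) (hL0 : 0 < L)
    (hxL : x = L * (lam + 1)) (hD1 : L * (lam + 1)^2 ≤ 1) :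
    Real.sqrt x ^ (2 - r) ≤ L ^ ((2 - r)/4) := by
  have e1 : Real.sqrt x ^ (2-r) = x ^ ((1:ℝ)/2 * (2-r)) := by
    rw [Real.sqrt_eq_rpow, ← Real.rpow_mul hx0.le]
  have e2 : x ^ ((1:ℝ)/2 * (2-r)) = (x^2) ^ ((2-r)/4) := by
    rw [← Real.rpow_natCast x 2, ← Real.rpow_mul hx0.le]
    congr 1
    push_cast
    ring
  have hlam1 : 0 < lam + 1 := by
    by_contra hcon
    push_neg at hcon
    nlinarith [hx0, hxL, hL0]
  have e3 : x^2 = L * (L * (lam + 1)^2) := by rw [hxL]; ring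
  have e4 : (L * (L * (lam + 1)^2)) ^ ((2-r)/4)
      = L ^ ((2-r)/4) * (L * (lam + 1)^2) ^ ((2-r)/4) :=
    Real.mul_rpow hL0.le (by positivity)
  have e5 : (L * (lam + 1)^2) ^ ((2-r)/4) ≤ 1 :=
    Real.rpow_le_one (by positivity) hD1 (by linarith)
  rw [e1, e2, e3, e4]
  calc L ^ ((2-r)/4) * (L * (lam + 1)^2) ^ ((2-r)/4)
      ≤ L ^ ((2-r)/4) * 1 := mul_le_mul_of_nonneg_left e5 (Real.rpow_nonneg hL0.le _)
  _ = L ^ ((2-r)/4) := mul_one _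

lemma heps_j {pp : ℕ} {n mbar : ℕ} {r β δ : ℝ} (hr0 : 0 < r) (hr2 : r < 2) (hβ : 0 < β)
    {lam2v sv : ℕ → ℝ} {q : ℕ → Fin pp → ℝ} {j : ℕ} (hj : j ∈ Finset.Icc 1 mbar)
    (hsj : (1:ℝ) ≤ sv j) (htauj : 0 < tau pp n lam2v j)
    (hweakj : weakLr r (sv j) (q j))
    (hkey2 : ((2:ℝ)^r / (1 - (2:ℝ)^(r-2))) * β^(2-r)
        * (sv j ^ r * tau pp n lam2v j ^ (2-r)) ≤ δ) :
    ∑ ν ∈ (Hset n mbar lam2v β q)ᶜ, (q j ν)^2 ≤ δ := by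
  classical
  have hsubc : (Hset n mbar lam2v β q)ᶜ ⊆
      Finset.univ.filter (fun ν => |q j ν| < β * tau pp n lam2v j) := by
    intro ν hν
    rw [Finset.mem_compl] at hν
    rw [Finset.mem_filter]
    refine ⟨Finset.mem_univ _, ?_⟩
    by_contra hcon
    push_neg at hcon
    refine hν ?_
    simp only [Hset, Finset.mem_filter, Finset.mem_univ, true_and]
    exact ⟨j, hj, hcon⟩
  have h1 : ∑ ν ∈ (Hset n mbar lam2v β q)ᶜ, (q j ν)^2
      ≤ ∑ ν ∈ Finset.univ.filter (fun ν => |q j ν| < β * tau pp n lam2v j), (q j ν)^2 :=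
    Finset.sum_le_sum_of_subset_of_nonneg hsubc (fun ν _ _ => sq_nonneg _)
  have h2 := tailsum hr0 hr2 (lt_of_lt_of_le one_pos hsj) (mul_pos hβ htauj) hweakj
  have h3 : (β * tau pp n lam2v j) ^ (2-r)
      = β^(2-r) * tau pp n lam2v j ^ (2-r) := Real.mul_rpow hβ.le htauj.le
  calc ∑ ν ∈ (Hset n mbar lam2v β q)ᶜ, (q j ν)^2
      ≤ ((2:ℝ)^r / (1 - (2:ℝ)^(r-2))) * (sv j ^ r * (β * tau pp n lam2v j)^(2-r)) :=
        le_trans h1 h2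
  _ = ((2:ℝ)^r / (1 - (2:ℝ)^(r-2))) * β^(2-r) * (sv j ^ r * tau pp n lam2v j ^ (2-r)) := by
        rw [h3]; ring
  _ ≤ δ := hkey2

/-- **Lemma 1 (cardinality of the high-signal set).** Under Conditions GR and SP, for
sufficiently large `n` the cardinality of `H = H(β)` satisfies
`m̄ ≤ card(H) ≤ C M_n` for a constant `C` depending only on `β` and `r`. -/
theorem card_Hset
    (mbar : ℕ) (hmbar : 1 ≤ mbar)
    (r : ℝ) (hr0 : 0 < r) (hr2 : r < 2)
    (p : ℕ → ℕ) (lam2 s : ℕ → ℕ → ℝ)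
    (hspike : SpikeOK mbar lam2)
    (hGR : CondGR mbar r p lam2) (hSP : CondSP mbar r p lam2 s)
    (β : ℝ) (hβ : 0 < β) :
    ∃ C : ℝ, 0 < C ∧
      ∃ N : ℕ, ∀ n, N ≤ n →
        ∀ q : ℕ → Fin (p n) → ℝ, inClass mbar r (s n) q →
          mbar ≤ (Hset n mbar (lam2 n) β q).card ∧
          ((Hset n mbar (lam2 n) β q).card : ℝ) ≤ C * Mn (p n) n mbar r (s n) (lam2 n) := by
  classical
  have h2r : (0:ℝ) < 2 - r := by linarith
  have hy1 : (2:ℝ)^(r-2) < 1 := Real.rpow_lt_one_of_one_lt_of_neg one_lt_two (by linarith)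
  have hCr0 : 0 < (2:ℝ)^r / (1 - (2:ℝ)^(r-2)) :=
    div_pos (Real.rpow_pos_of_pos two_pos _) (by linarith)
  have hmbar0 : (0:ℝ) < mbar := by exact_mod_cast hmbar
  have hδ0 : 0 < 1 / (2 * (mbar:ℝ)) := by positivity
  have hβr : (0:ℝ) < β^(2-r) := Real.rpow_pos_of_pos hβ _
  set η : ℝ := (1 / (2 * (mbar:ℝ))) / (((2:ℝ)^r / (1 - (2:ℝ)^(r-2))) * β^(2-r)) with hηdef
  have hη0 : 0 < η := by positivity
  refine ⟨max 1 ((β^r)⁻¹), lt_of_lt_of_le one_pos (le_max_left _ _), ?_⟩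
  have hlogn : Tendsto (fun n : ℕ => Real.log n / n) atTop (nhds 0) :=
    (Real.isLittleO_log_id_atTop.tendsto_div_nhds_zero).comp tendsto_natCast_atTop_atTop
  have hev1 : ∀ᶠ n in atTop, Real.log (p n) / n < 1/8 :=
    hGR.1.eventually_lt_const (by norm_num)
  have hev2 : ∀ᶠ n : ℕ in atTop, Real.log n / n < 1/8 :=
    hlogn.eventually_lt_const (by norm_num)
  have hev3 : ∀ᶠ n in atTop,
      Real.log (pnn (p n) n) / (n * lam2 n mbar ^ 2) < 1/8 :=
    hGR.2.2.1.eventually_lt_const (by norm_num)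
  have hev4 : ∀ᶠ n in atTop, ∀ j ∈ Finset.Icc 1 mbar,
      s n j ^ r * (Real.log (pnn (p n) n) / (n * lam2 n j ^ 2)) ^ ((1:ℝ)/2 - r/4)
        / min 1 (lam2 n 1 ^ 2) < η := by
    rw [Filter.eventually_all_finset]
    intro j hj
    exact (hSP j hj).2.eventually_lt_const hη0
  have hev5 : ∀ᶠ n : ℕ in atTop, 2 ≤ n := Filter.eventually_ge_atTop 2
  obtain ⟨N, hN⟩ := Filter.eventually_atTop.mp
    (((hev1.and hev2).and (hev3.and hev4)).and hev5)
  refine ⟨N, fun n hn q hq => ?_⟩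
  obtain ⟨⟨⟨hlogp8, hlogn8⟩, ⟨hLm8, hSPb⟩⟩, hn2⟩ := hN n hn
  obtain ⟨horth, hweak⟩ := hq
  have hn0 : (0:ℝ) < n := by
    have h0 : (0:ℕ) < n := by omega
    exact_mod_cast h0
  have hpnn2 : (2:ℝ) ≤ (pnn (p n) n : ℝ) := by
    have h1 : (2:ℕ) ≤ pnn (p n) n := le_trans hn2 (le_max_right _ _)
    exact_mod_cast h1
  have hlog0 : 0 < Real.log (pnn (p n) n) := Real.log_pos (by linarith)
  have hpn8 : Real.log (pnn (p n) n) / n ≤ 1/8 := by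
    rcases max_choice (p n) n with h | h
    · have h' : pnn (p n) n = p n := h
      rw [h']; linarith
    · have h' : pnn (p n) n = n := h
      rw [h']; linarith
  have hlam : ∀ j ∈ Finset.Icc 1 mbar, 0 < lam2 n j := fun j hj => (hspike n).1 j hj
  have hlammono : ∀ j ∈ Finset.Icc 1 mbar, lam2 n mbar ≤ lam2 n j := by
    intro j hj
    rw [Finset.mem_Icc] at hj
    exact (hspike n).2.1 j mbar hj.1 hj.2 le_rfl
  have hs1 : ∀ j ∈ Finset.Icc 1 mbar, (1:ℝ) ≤ s n j := fun j hj => (hSP j hj).1 n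
  have hhpos : ∀ j ∈ Finset.Icc 1 mbar, 0 < hfun (lam2 n j) := by
    intro j hj
    have hlamj := hlam j hj
    have hfe : hfun (lam2 n j) = lam2 n j ^ 2 / (lam2 n j + 1) := rfl
    rw [hfe]
    exact div_pos (pow_pos hlamj 2) (by linarith)
  have htau0 : ∀ j ∈ Finset.Icc 1 mbar, 0 < tau (p n) n (lam2 n) j := by
    intro j hj
    exact Real.sqrt_pos.mpr (div_pos hlog0 (mul_pos hn0 (hhpos j hj)))
  have hupper := card_Hset_upper n mbar hr0 hβ (lam2 n) (s n) q htau0 hs1 hweak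
  have hδm : (1 / (2 * (mbar:ℝ))) * mbar < 1 := by
    rw [div_mul_eq_mul_div, div_lt_one (by positivity)]
    linarith
  have heps : ∀ j ∈ Finset.Icc 1 mbar,
      ∑ ν ∈ (Hset n mbar (lam2 n) β q)ᶜ, (q j ν)^2 ≤ 1 / (2 * (mbar:ℝ)) := by
    intro j hj
    have hlamj := hlam j hj
    have hτj := htau0 j hj
    refine heps_j hr0 hr2 hβ hj (hs1 j hj) hτj (hweak j hj) ?_
    -- key bound
    have hlamm0 : 0 < lam2 n mbar := hlam mbar (Finset.mem_Icc.mpr ⟨hmbar, le_rfl⟩)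
    have hL0 : 0 < Real.log (pnn (p n) n) / (n * lam2 n j ^ 2) :=
      div_pos hlog0 (by positivity)
    have hxL : Real.log (pnn (p n) n) / (n * hfun (lam2 n j))
        = (Real.log (pnn (p n) n) / (n * lam2 n j ^ 2)) * (lam2 n j + 1) := by
      have hfe : hfun (lam2 n j) = lam2 n j ^ 2 / (lam2 n j + 1) := rfl
      rw [hfe]
      field_simp
    have hlogle : Real.log (pnn (p n) n) ≤ (n:ℝ) / 8 := by
      rw [div_le_iff₀ hn0] at hpn8
      linarith
    have hlogle2 : Real.log (pnn (p n) n) ≤ (n:ℝ) * lam2 n mbar ^ 2 / 8 := by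
      have hd : (0:ℝ) < (n:ℝ) * lam2 n mbar ^ 2 := by positivity
      rw [div_lt_iff₀ hd] at hLm8
      linarith
    have hD1 : (Real.log (pnn (p n) n) / (n * lam2 n j ^ 2)) * (lam2 n j + 1)^2 ≤ 1 :=
      D_le_one hlog0 hn0 hlamj hlamm0 hlogle hlogle2 (hlammono j hj)
    have htaueq : tau (p n) n (lam2 n) j
        = Real.sqrt (Real.log (pnn (p n) n) / (n * hfun (lam2 n j))) := rfl
    have htau_r : tau (p n) n (lam2 n) j ^ (2-r)
        ≤ (Real.log (pnn (p n) n) / (n * lam2 n j ^ 2)) ^ ((2-r)/4) := by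
      rw [htaueq]
      exact tau_rpow_le hr2 (div_pos hlog0 (mul_pos hn0 (hhpos j hj))) hL0 hxL hD1
    have hSPj := hSPb j hj
    have hexp : (1:ℝ)/2 - r/4 = (2-r)/4 := by ring
    rw [hexp] at hSPj
    have hlam1 : 0 < lam2 n 1 := hlam 1 (Finset.mem_Icc.mpr ⟨le_rfl, hmbar⟩)
    have hminpos : 0 < min 1 (lam2 n 1 ^ 2) := lt_min one_pos (pow_pos hlam1 2)
    have hminle : min 1 (lam2 n 1 ^ 2) ≤ 1 := min_le_left _ _
    have hAle : s n j ^ r * (Real.log (pnn (p n) n) / (n * lam2 n j ^ 2)) ^ ((2-r)/4)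
        ≤ η * min 1 (lam2 n 1 ^ 2) := (div_le_iff₀ hminpos).mp hSPj.le
    have hkey : s n j ^ r * tau (p n) n (lam2 n) j ^ (2-r) ≤ η := by
      calc s n j ^ r * tau (p n) n (lam2 n) j ^ (2-r)
          ≤ s n j ^ r * (Real.log (pnn (p n) n) / (n * lam2 n j ^ 2)) ^ ((2-r)/4) :=
            mul_le_mul_of_nonneg_left htau_r (Real.rpow_nonneg (by linarith [hs1 j hj]) _)
      _ ≤ η * min 1 (lam2 n 1 ^ 2) := hAle
      _ ≤ η := mul_le_of_le_one_right hη0.le hminle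
    calc ((2:ℝ)^r / (1 - (2:ℝ)^(r-2))) * β^(2-r)
        * (s n j ^ r * tau (p n) n (lam2 n) j ^ (2-r))
        ≤ ((2:ℝ)^r / (1 - (2:ℝ)^(r-2))) * β^(2-r) * η :=
          mul_le_mul_of_nonneg_left hkey (by positivity)
    _ = 1 / (2 * (mbar:ℝ)) := by
          rw [hηdef, mul_comm (((2:ℝ)^r / (1 - (2:ℝ)^(r-2))) * β^(2-r))]
          exact div_mul_cancel₀ _ (mul_pos hCr0 hβr).ne'
  exact ⟨lower_card mbar q (Hset n mbar (lam2 n) β q) _ hδ0.le hδm horth heps, hupper⟩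

end SPCA
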